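/- Assume f : ℝ^d → ℝ is measurable and satisfies conditions (0.1) and (0.2). Then, as n → ∞, ϑ_n^{f,A} converges almost surely to ϑ_⋆^{f,A} and v_n^{f,A}(ϑ_n^{f,A}) converges almost surely to v^{f,A}(ϑ_⋆^{f,A}). -/

import Mathlib

open MeasureTheory ProbabilityTheory Filter Real Topology

noncomputable section

/-- Euclidean norm on `ℝ^k`. -/
def nrm {k : ℕ} (x : Fin k → ℝ) : ℝ := Real.sqrt (∑ i, x i ^ 2)

/-- Euclidean inner (dot) product on `ℝ^k`. -/
def dot {k : ℕ} (x y : Fin k → ℝ) : ℝ := ∑ i, x i * y i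

/-- The standard Gaussian measure on `ℝ^d`. -/
def stdGaussian (d : ℕ) : Measure (Fin d → ℝ) :=
  MeasureTheory.Measure.pi fun _ => ProbabilityTheory.gaussianReal 0 1

/-- `v^f(θ) = E(f²(G) e^{-θ·G + |θ|²/2})`. -/
def vF {d : ℕ} (f : (Fin d → ℝ) → ℝ) (θ : Fin d → ℝ) : ℝ :=
  ∫ x, f x ^ 2 * Real.exp (-(dot θ x) + nrm θ ^ 2 / 2) ∂ stdGaussian d

/-- `v^{f,A}(ϑ) = v^f(Aϑ)`. -/
def vFA {d d' : ℕ} (A : Matrix (Fin d) (Fin d') ℝ) (f : (Fin d → ℝ) → ℝ)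
    (ϑ : Fin d' → ℝ) : ℝ :=
  vF f (A.mulVec ϑ)

/-- The sample average approximation `v_n^{f,A}`. -/
def vnFA {d d' : ℕ} {Ω : Type*} (Gs : ℕ → Ω → Fin d → ℝ)
    (A : Matrix (Fin d) (Fin d') ℝ) (f : (Fin d → ℝ) → ℝ) (n : ℕ) (ω : Ω)
    (ϑ : Fin d' → ℝ) : ℝ :=
  (1 / n : ℝ) * ∑ i ∈ Finset.range n,
    f (Gs i ω) ^ 2 * Real.exp (-(dot (A.mulVec ϑ) (Gs i ω)) + nrm (A.mulVec ϑ) ^ 2 / 2)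

/-- The importance sampling estimator `M_n(θ, g)`. -/
def Mn {d : ℕ} {Ω : Type*} (Gs : ℕ → Ω → Fin d → ℝ) (n : ℕ) (θ : Fin d → ℝ)
    (g : (Fin d → ℝ) → ℝ) (ω : Ω) : ℝ :=
  (1 / n : ℝ) * ∑ i ∈ Finset.range n,
    g (Gs i ω + θ) * Real.exp (-(dot θ (Gs i ω)) - nrm θ ^ 2 / 2)

/-- The Hölder class `ℋ_α`. -/
def MemH {d : ℕ} (α : ℝ) (g : (Fin d → ℝ) → ℝ) : Prop :=
  ∃ β ∈ Set.Ico (0 : ℝ) 2, ∃ lam > (0 : ℝ),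
    (∀ x, |g x| ≤ lam * Real.exp (nrm x ^ β)) ∧
    ∀ x y, |g x - g y| ≤ lam * Real.exp (max (nrm x ^ β) (nrm y ^ β)) * nrm (x - y) ^ α

/-- `𝒜`-monotonicity of a function on `ℝ^d` for a vector `𝒜 ∈ ℝ^d`. -/
def AMonotonic {d : ℕ} (𝒜 : Fin d → ℝ) (h : (Fin d → ℝ) → ℝ) : Prop :=
  (∀ x, Monotone fun ϑ : ℝ => h (x + ϑ • 𝒜)) ∨ (∀ x, Antitone fun ϑ : ℝ => h (x + ϑ • 𝒜))

/-- The class `𝒱_𝒜`. -/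
def MemV {d : ℕ} (𝒜 : Fin d → ℝ) (h : (Fin d → ℝ) → ℝ) : Prop :=
  ∃ g₁ g₂ : (Fin d → ℝ) → ℝ, h = g₁ + g₂ ∧ AMonotonic 𝒜 g₁ ∧ AMonotonic 𝒜 g₂ ∧
    ∃ lam > (0 : ℝ), ∃ β ∈ Set.Ico (0 : ℝ) 2,
      ∀ x, |g₁ x| ≤ lam * Real.exp (nrm x ^ β) ∧ |g₂ x| ≤ lam * Real.exp (nrm x ^ β)

/-!
Write the integrand of `v^f` as `f(x)² e^{-|x|²/2} e^{|θ - x|²/2}`. By the parallelogram law every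
empirical average `v_n` is strongly log-convex along midpoints,
`v_n((u + v)/2) ≤ e^{-|A(u - v)|²/8} √(v_n u) √(v_n v)`, so a minimiser `ϑ_n` satisfies
`|A(ϑ_n - ϑ_⋆)|²/4 ≤ log (v_n(ϑ_⋆) / v_n(ϑ_n))`. Since `v_n ≥ (1/n) ∑ f(G_i)² e^{-|G_i|²/2}`, whose
limit is positive by (0.1), this keeps `ϑ_n` bounded, and it forces `ϑ_n → ϑ_⋆` as soon as
`v_n(ϑ_n) → v(ϑ_⋆)`. For the latter, the strong law holds simultaneously on a countable dense set
of parameters, and on balls `v_n` is Lipschitz uniformly in `n`, with constant controlled by the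
empirical mean of the envelope `f² e^{a|x|}`, integrable by (0.2).
-/
open Matrix Metric Set

lemma nrm_eq_norm {k : ℕ} (x : Fin k → ℝ) : nrm x = ‖WithLp.toLp 2 x‖ := by
  simp [nrm, EuclideanSpace.norm_eq]

lemma nrm_nonneg {k : ℕ} (x : Fin k → ℝ) : 0 ≤ nrm x := Real.sqrt_nonneg _

lemma nrm_sq {k : ℕ} (x : Fin k → ℝ) : nrm x ^ 2 = ∑ i, x i ^ 2 :=
  Real.sq_sqrt (Finset.sum_nonneg fun _ _ => sq_nonneg _)

lemma nrm_sub_le {k : ℕ} (x y : Fin k → ℝ) : nrm (x - y) ≤ nrm x + nrm y := by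
  simpa only [nrm_eq_norm, WithLp.toLp_sub] using norm_sub_le _ _

lemma abs_nrm_sub_nrm_le {k : ℕ} (x y : Fin k → ℝ) : |nrm x - nrm y| ≤ nrm (x - y) := by
  simpa only [nrm_eq_norm, WithLp.toLp_sub] using abs_norm_sub_norm_le _ _

lemma nrm_le_sum_abs {k : ℕ} (x : Fin k → ℝ) : nrm x ≤ ∑ i, |x i| := by
  rw [nrm, Real.sqrt_le_left (Finset.sum_nonneg fun i _ => abs_nonneg (x i))]
  simpa only [sq_abs] using Finset.sum_sq_le_sq_sum_of_nonneg fun i _ => abs_nonneg (x i)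

lemma continuous_nrm {k : ℕ} : Continuous (nrm : (Fin k → ℝ) → ℝ) := by
  unfold nrm; fun_prop

lemma continuous_dot {k : ℕ} (θ : Fin k → ℝ) : Continuous (dot θ) := by
  unfold dot; fun_prop

lemma neg_dot_add_nrm_sq_div_two {k : ℕ} (θ x : Fin k → ℝ) :
    -(dot θ x) + nrm θ ^ 2 / 2 = (nrm (θ - x) ^ 2 - nrm x ^ 2) / 2 := by
  simp only [nrm_sq, dot, Pi.sub_apply, ← Finset.sum_sub_distrib, Finset.sum_div,
    ← Finset.sum_neg_distrib, ← Finset.sum_add_distrib]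
  exact Finset.sum_congr rfl fun i _ => by ring

lemma nrm_midpoint_sub_sq {k : ℕ} (α β x : Fin k → ℝ) :
    nrm ((2 : ℝ)⁻¹ • (α + β) - x) ^ 2
      = (nrm (α - x) ^ 2 + nrm (β - x) ^ 2) / 2 - nrm (α - β) ^ 2 / 4 := by
  simp only [nrm_sq, Pi.sub_apply, Pi.smul_apply, Pi.add_apply, smul_eq_mul,
    ← Finset.sum_add_distrib, Finset.sum_div, ← Finset.sum_sub_distrib]
  exact Finset.sum_congr rfl fun i _ => by ring

section MulVec
variable {d k : ℕ} (A : Matrix (Fin d) (Fin k) ℝ)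

def mulVecEuclidean : (Fin k → ℝ) →ₗ[ℝ] EuclideanSpace ℝ (Fin d) :=
  (WithLp.linearEquiv 2 ℝ (Fin d → ℝ)).symm.toLinearMap ∘ₗ A.mulVecLin

lemma norm_mulVecEuclidean (v : Fin k → ℝ) : ‖mulVecEuclidean A v‖ = nrm (A *ᵥ v) :=
  (nrm_eq_norm _).symm

lemma exists_nrm_mulVec_le : ∃ K ≥ 0, ∀ v, nrm (A *ᵥ v) ≤ K * ‖v‖ :=
  ⟨‖LinearMap.toContinuousLinearMap (mulVecEuclidean A)‖, norm_nonneg _, fun v => by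
    simpa [norm_mulVecEuclidean] using
      (LinearMap.toContinuousLinearMap (mulVecEuclidean A)).le_opNorm v⟩

lemma exists_norm_le_mul_nrm_mulVec (hA : A.rank = k) :
    ∃ c ≥ 0, ∀ v, ‖v‖ ≤ c * nrm (A *ᵥ v) := by
  have hker : LinearMap.ker (mulVecEuclidean A) = ⊥ := by
    have h := LinearMap.finrank_range_add_finrank_ker A.mulVecLin
    rw [Module.finrank_fin_fun, show Module.finrank ℝ (LinearMap.range A.mulVecLin) = k from hA]
      at h
    rw [mulVecEuclidean, LinearEquiv.ker_comp]
    exact Submodule.finrank_eq_zero.1 (by omega)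
  obtain ⟨c, -, hc⟩ := LinearMap.exists_antilipschitzWith _ hker
  refine ⟨c, c.2, fun v => ?_⟩
  simpa [norm_mulVecEuclidean] using hc.le_mul_dist v 0

end MulVec

section EmpMean
variable {α : Type*} (x : ℕ → α) (n : ℕ)

def empMean (g : α → ℝ) : ℝ := (1 / n : ℝ) * ∑ i ∈ Finset.range n, g (x i)

variable {x n}

lemma empMean_mono {g h : α → ℝ} (hgh : ∀ y, g y ≤ h y) : empMean x n g ≤ empMean x n h :=
  mul_le_mul_of_nonneg_left (Finset.sum_le_sum fun i _ => hgh (x i)) (by positivity)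

lemma empMean_nonneg {g : α → ℝ} (hg : ∀ y, 0 ≤ g y) : 0 ≤ empMean x n g :=
  mul_nonneg (by positivity) (Finset.sum_nonneg fun i _ => hg (x i))

lemma empMean_sub (g h : α → ℝ) :
    empMean x n (fun y => g y - h y) = empMean x n g - empMean x n h := by
  simp only [empMean, Finset.sum_sub_distrib, mul_sub]

lemma empMean_const_mul (c : ℝ) (g : α → ℝ) :
    empMean x n (fun y => c * g y) = c * empMean x n g := by
  simp only [empMean, ← Finset.mul_sum]; ring

lemma exists_ne_zero_of_empMean_ne_zero {g : α → ℝ} (h : empMean x n g ≠ 0) :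
    ∃ i < n, g (x i) ≠ 0 := by
  obtain ⟨i, hi, hgi⟩ := Finset.exists_ne_zero_of_sum_ne_zero (right_ne_zero_of_mul h)
  exact ⟨i, Finset.mem_range.1 hi, hgi⟩

lemma empMean_sqrt_mul_sqrt_le {g h : α → ℝ} (hg : ∀ y, 0 ≤ g y) (hh : ∀ y, 0 ≤ h y) :
    empMean x n (fun y => √(g y) * √(h y)) ≤ √(empMean x n g) * √(empMean x n h) := by
  have hn : (0 : ℝ) ≤ 1 / n := by positivity
  calc empMean x n (fun y => √(g y) * √(h y))
      ≤ (1 / n : ℝ) * (√(∑ i ∈ Finset.range n, g (x i)) * √(∑ i ∈ Finset.range n, h (x i))) :=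
        mul_le_mul_of_nonneg_left
          (Real.sum_sqrt_mul_sqrt_le _ (fun i => hg (x i)) fun i => hh (x i)) hn
    _ = √(empMean x n g) * √(empMean x n h) := by
        rw [empMean, empMean, Real.sqrt_mul hn, Real.sqrt_mul hn,
          mul_mul_mul_comm, Real.mul_self_sqrt hn]

end EmpMean

section Integrand
variable {d : ℕ} (f : (Fin d → ℝ) → ℝ)

def gaussWeightedSq (x : Fin d → ℝ) : ℝ := f x ^ 2 * exp (-(nrm x ^ 2) / 2)

def vIntegrand (θ x : Fin d → ℝ) : ℝ := f x ^ 2 * exp (-(dot θ x) + nrm θ ^ 2 / 2)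

variable {f}

lemma gaussWeightedSq_nonneg (x : Fin d → ℝ) : 0 ≤ gaussWeightedSq f x := by
  unfold gaussWeightedSq; positivity

lemma vIntegrand_nonneg (θ x : Fin d → ℝ) : 0 ≤ vIntegrand f θ x := by
  unfold vIntegrand; positivity

lemma vIntegrand_eq (θ x : Fin d → ℝ) :
    vIntegrand f θ x = gaussWeightedSq f x * exp (nrm (θ - x) ^ 2 / 2) := by
  rw [vIntegrand, gaussWeightedSq, neg_dot_add_nrm_sq_div_two, mul_assoc, ← exp_add]
  ring_nf

lemma gaussWeightedSq_le_vIntegrand (θ x : Fin d → ℝ) :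
    gaussWeightedSq f x ≤ vIntegrand f θ x := by
  rw [vIntegrand_eq]
  exact le_mul_of_one_le_right (gaussWeightedSq_nonneg x) (one_le_exp (by positivity))

lemma vIntegrand_le {a : ℝ} {θ : Fin d → ℝ} (hθ : nrm θ ≤ a) (x : Fin d → ℝ) :
    vIntegrand f θ x ≤ exp (a ^ 2 / 2) * (f x ^ 2 * exp (a * nrm x)) := by
  have hsub := nrm_sub_le θ x
  have hx := nrm_nonneg x
  calc vIntegrand f θ x = f x ^ 2 * exp ((nrm (θ - x) ^ 2 - nrm x ^ 2) / 2) := by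
        rw [vIntegrand, neg_dot_add_nrm_sq_div_two]
    _ ≤ f x ^ 2 * exp (a ^ 2 / 2 + a * nrm x) := by
        gcongr
        nlinarith [nrm_nonneg (θ - x)]
    _ = _ := by rw [exp_add]; ring

lemma vIntegrand_midpoint (α β x : Fin d → ℝ) :
    vIntegrand f ((2 : ℝ)⁻¹ • (α + β)) x
      = exp (-(nrm (α - β) ^ 2 / 8)) * (√(vIntegrand f α x) * √(vIntegrand f β x)) := by
  have hg := gaussWeightedSq_nonneg (f := f) x
  rw [vIntegrand_eq, vIntegrand_eq, vIntegrand_eq, nrm_midpoint_sub_sq, ← Real.sqrt_mul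
    (by positivity), show gaussWeightedSq f x * exp (nrm (α - x) ^ 2 / 2)
      * (gaussWeightedSq f x * exp (nrm (β - x) ^ 2 / 2))
      = (gaussWeightedSq f x * exp ((nrm (α - x) ^ 2 + nrm (β - x) ^ 2) / 4)) ^ 2 by
        rw [mul_mul_mul_comm, ← exp_add, mul_pow, sq (exp _), ← exp_add]; ring_nf,
    Real.sqrt_sq (by positivity), mul_left_comm, ← exp_add]
  ring_nf

lemma vIntegrand_sub_le {a : ℝ} {α β : Fin d → ℝ} (hα : nrm α ≤ a) (hβ : nrm β ≤ a)
    (x : Fin d → ℝ) :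
    vIntegrand f α x - vIntegrand f β x
      ≤ nrm (α - β) * exp (a ^ 2 / 2 + a) * (f x ^ 2 * exp ((a + 1) * nrm x)) := by
  have hP : nrm (α - x) ^ 2 / 2 - nrm (β - x) ^ 2 / 2 ≤ nrm (α - β) * (a + nrm x) := by
    have h := abs_le.1 (abs_nrm_sub_nrm_le (α - x) (β - x))
    rw [sub_sub_sub_cancel_right] at h
    have hs : nrm (α - x) + nrm (β - x) ≤ 2 * (a + nrm x) := by
      linarith [nrm_sub_le α x, nrm_sub_le β x]
    nlinarith [mul_nonneg (sub_nonneg.2 h.2) (add_nonneg (nrm_nonneg (α - x))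
      (nrm_nonneg (β - x))), mul_le_mul_of_nonneg_left hs (nrm_nonneg (α - β))]
  set Pα := nrm (α - x) ^ 2 / 2
  set Pβ := nrm (β - x) ^ 2 / 2
  have hexp : exp Pα - exp Pβ ≤ exp Pα * (Pα - Pβ) := by
    have h := add_one_le_exp (Pβ - Pα)
    have : exp Pβ = exp Pα * exp (Pβ - Pα) := by rw [← exp_add]; ring_nf
    nlinarith [exp_pos Pα]
  have hlin : a + nrm x ≤ exp (a + nrm x) := by linarith [add_one_le_exp (a + nrm x)]
  calc vIntegrand f α x - vIntegrand f β x
      = gaussWeightedSq f x * (exp Pα - exp Pβ) := by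
        rw [vIntegrand_eq, vIntegrand_eq]; ring
    _ ≤ gaussWeightedSq f x * exp Pα * (nrm (α - β) * (a + nrm x)) := by
        rw [mul_assoc]
        exact mul_le_mul_of_nonneg_left (hexp.trans (by gcongr)) (gaussWeightedSq_nonneg x)
    _ ≤ exp (a ^ 2 / 2) * (f x ^ 2 * exp (a * nrm x)) * (nrm (α - β) * exp (a + nrm x)) := by
        rw [← vIntegrand_eq]
        exact mul_le_mul (vIntegrand_le hα x)
          (mul_le_mul_of_nonneg_left hlin (nrm_nonneg _))
          (mul_nonneg (nrm_nonneg _) (by linarith [nrm_nonneg α, nrm_nonneg x]))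
          (by positivity)
    _ = _ := by simp only [add_mul, one_mul, exp_add]; ring

end Integrand

section SamplePath
variable {d k : ℕ} (f : (Fin d → ℝ) → ℝ) (A : Matrix (Fin d) (Fin k) ℝ) (x : ℕ → Fin d → ℝ)

/-- `vnFA Gs A f n ω` is `sampleV f A (Gs · ω) n` by definition. -/
def sampleV (n : ℕ) (ϑ : Fin k → ℝ) : ℝ := empMean x n (vIntegrand f (A *ᵥ ϑ))

variable {f A x}

lemma sampleV_nonneg (n : ℕ) (ϑ : Fin k → ℝ) : 0 ≤ sampleV f A x n ϑ :=
  empMean_nonneg (vIntegrand_nonneg _)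

lemma empMean_gaussWeightedSq_le_sampleV (n : ℕ) (ϑ : Fin k → ℝ) :
    empMean x n (gaussWeightedSq f) ≤ sampleV f A x n ϑ :=
  empMean_mono (gaussWeightedSq_le_vIntegrand _)

lemma sampleV_midpoint_le (n : ℕ) (u v : Fin k → ℝ) :
    sampleV f A x n ((2 : ℝ)⁻¹ • (u + v))
      ≤ exp (-(nrm (A *ᵥ (u - v)) ^ 2 / 8)) * (√(sampleV f A x n u) * √(sampleV f A x n v)) := by
  have hmid : A *ᵥ ((2 : ℝ)⁻¹ • (u + v)) = (2 : ℝ)⁻¹ • (A *ᵥ u + A *ᵥ v) := by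
    rw [mulVec_smul, mulVec_add]
  rw [sampleV, hmid, mulVec_sub, funext (vIntegrand_midpoint (f := f) (A *ᵥ u) (A *ᵥ v)),
    empMean_const_mul]
  exact mul_le_mul_of_nonneg_left
    (empMean_sqrt_mul_sqrt_le (vIntegrand_nonneg _) (vIntegrand_nonneg _)) (exp_pos _).le

/-- Compare the minimiser `θ` with the midpoint of `θ` and `v`, using the gain in
`sampleV_midpoint_le`. -/
lemma nrm_mulVec_sq_div_four_le_log {n : ℕ} {θ : Fin k → ℝ}
    (hmin : ∀ ϑ, sampleV f A x n θ ≤ sampleV f A x n ϑ) (hpos : 0 < sampleV f A x n θ)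
    (v : Fin k → ℝ) :
    nrm (A *ᵥ (θ - v)) ^ 2 / 4 ≤ log (sampleV f A x n v / sampleV f A x n θ) := by
  set Φ := sampleV f A x n
  set t := exp (-(nrm (A *ᵥ (θ - v)) ^ 2 / 8))
  have hsqrt : 0 < √(Φ θ) := Real.sqrt_pos.2 hpos
  have h1 : √(Φ θ) * √(Φ θ) ≤ √(Φ θ) * (t * √(Φ v)) := by
    rw [Real.mul_self_sqrt hpos.le, mul_left_comm]
    exact (hmin _).trans (sampleV_midpoint_le n θ v)
  have h2 : Φ θ ≤ t ^ 2 * Φ v := by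
    have := pow_le_pow_left₀ hsqrt.le (le_of_mul_le_mul_left h1 hsqrt) 2
    rwa [mul_pow, Real.sq_sqrt hpos.le, Real.sq_sqrt (sampleV_nonneg n v)] at this
  rw [le_log_iff_exp_le (div_pos (hpos.trans_le (hmin v)) hpos), le_div_iff₀ hpos]
  calc exp (nrm (A *ᵥ (θ - v)) ^ 2 / 4) * Φ θ
      ≤ exp (nrm (A *ᵥ (θ - v)) ^ 2 / 4) * (t ^ 2 * Φ v) :=
        mul_le_mul_of_nonneg_left h2 (exp_pos _).le
    _ = Φ v := by rw [← mul_assoc, ← exp_nat_mul, ← exp_add]; ring_nf; simp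

lemma sampleV_sub_le {n : ℕ} {a : ℝ} {u v : Fin k → ℝ} (hu : nrm (A *ᵥ u) ≤ a)
    (hv : nrm (A *ᵥ v) ≤ a) :
    sampleV f A x n u - sampleV f A x n v
      ≤ nrm (A *ᵥ (u - v)) * exp (a ^ 2 / 2 + a)
        * empMean x n (fun y => f y ^ 2 * exp ((a + 1) * nrm y)) := by
  rw [sampleV, sampleV, ← empMean_sub, ← empMean_const_mul, mulVec_sub]
  exact empMean_mono (vIntegrand_sub_le hu hv)

end SamplePath

/-- By compactness a finite part of `D` is a fine net of the ball, and the modulus of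
continuity, uniform in `n`, transfers the bounds from the net to `θ n`. -/
lemma eventually_lt_of_dense {X : Type*} [MetricSpace X] [ProperSpace X] {Φ : ℕ → X → ℝ}
    {D : Set X} (hD : Dense D) {m : ℝ} (hm : ∀ q ∈ D, ∀ m' < m, ∀ᶠ n in atTop, m' < Φ n q)
    {θ : ℕ → X} {c : X} {R L : ℝ} (hθ : ∀ᶠ n in atTop, θ n ∈ closedBall c R)
    (hL : ∀ᶠ n in atTop, ∀ u ∈ closedBall c (R + 1), ∀ v ∈ closedBall c (R + 1),
      Φ n v - Φ n u ≤ L * dist u v) :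
    ∀ m' < m, ∀ᶠ n in atTop, m' < Φ n (θ n) := by
  intro m' hm'
  set δ := min 1 ((m - m') / (2 * (|L| + 1)))
  have hδ0 : 0 < δ := lt_min one_pos (by have := abs_nonneg L; positivity)
  have hδL : |L| * δ ≤ (m - m') / 2 := by
    calc |L| * δ ≤ (|L| + 1) * ((m - m') / (2 * (|L| + 1))) := by
          gcongr
          · linarith
          · exact min_le_right _ _
      _ = (m - m') / 2 := by field_simp
  obtain ⟨t, htD, ht, hcover⟩ := (isCompact_closedBall c R).elim_finite_subcover_image
    (b := D) (c := fun q => ball q δ) (fun _ _ => isOpen_ball) fun z _ => by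
      obtain ⟨q, hq, hzq⟩ := hD.exists_dist_lt z hδ0
      exact mem_biUnion hq (mem_ball.2 hzq)
  have hnet : ∀ᶠ n in atTop, ∀ q ∈ t, m - (m - m') / 2 < Φ n q :=
    ht.eventually_all.2 fun q hq => hm q (htD hq) _ (by linarith)
  filter_upwards [hnet, hθ, hL] with n hn hθn hLn
  obtain ⟨q, hqt, hq⟩ := mem_iUnion₂.1 (hcover hθn)
  have hdist : dist (θ n) q < δ := hq
  have hqR : q ∈ closedBall c (R + 1) := mem_closedBall.2 <| by
    linarith [dist_triangle q (θ n) c, mem_closedBall.1 hθn, dist_comm q (θ n),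
      min_le_left 1 ((m - m') / (2 * (|L| + 1)))]
  have hlip := hLn (θ n) (closedBall_subset_closedBall (by linarith) hθn) q hqR
  have : L * dist (θ n) q ≤ |L| * δ :=
    (le_abs_self L |> mul_le_mul_of_nonneg_right <| dist_nonneg).trans
      (mul_le_mul_of_nonneg_left hdist.le (abs_nonneg L))
  linarith [hn q hqt]

section SamplePathConvergence
variable {d k : ℕ} {f : (Fin d → ℝ) → ℝ} {A : Matrix (Fin d) (Fin k) ℝ} {x : ℕ → Fin d → ℝ}

lemma exists_eventually_sampleV_sub_le
    (hV : ∀ a : ℕ, ∃ U, Tendsto (fun n => empMean x n (fun y => f y ^ 2 * exp (a * nrm y)))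
      atTop (𝓝 U))
    (c : Fin k → ℝ) (R : ℝ) :
    ∃ L, ∀ᶠ n in atTop, ∀ u ∈ closedBall c R, ∀ v ∈ closedBall c R,
      sampleV f A x n v - sampleV f A x n u ≤ L * dist u v := by
  obtain ⟨K, hK0, hK⟩ := exists_nrm_mulVec_le A
  set a : ℕ := ⌈K * (‖c‖ + R)⌉₊
  obtain ⟨U, hU⟩ := hV (a + 1)
  push_cast at hU
  have hball : ∀ u ∈ closedBall c R, nrm (A *ᵥ u) ≤ a := fun u hu =>
    (hK u).trans <| (mul_le_mul_of_nonneg_left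
      (norm_le_norm_add_const_of_dist_le (mem_closedBall.1 hu)) hK0).trans (Nat.le_ceil _)
  refine ⟨K * exp ((a : ℝ) ^ 2 / 2 + a) * (U + 1), ?_⟩
  filter_upwards [hU.eventually_lt_const (lt_add_one U)] with n hn u hu v hv
  calc sampleV f A x n v - sampleV f A x n u
      ≤ nrm (A *ᵥ (v - u)) * exp ((a : ℝ) ^ 2 / 2 + a)
          * empMean x n (fun y => f y ^ 2 * exp ((a + 1) * nrm y)) :=
        sampleV_sub_le (hball v hv) (hball u hu)
    _ ≤ K * dist u v * exp ((a : ℝ) ^ 2 / 2 + a) * (U + 1) := by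
        rw [dist_comm, dist_eq_norm]
        gcongr
        · exact empMean_nonneg fun y => by positivity
        · exact hK _
    _ = _ := by ring

lemma eventually_argmin_and_half_lt_sampleV {w : ℝ} (hw : 0 < w)
    (hW : Tendsto (fun n => empMean x n (gaussWeightedSq f)) atTop (𝓝 w)) {θ : ℕ → Fin k → ℝ}
    (hmin : ∀ n, (∃ i < n, f (x i) ≠ 0) → ∀ ϑ, sampleV f A x n (θ n) ≤ sampleV f A x n ϑ) :
    ∀ᶠ n in atTop, (∀ ϑ, sampleV f A x n (θ n) ≤ sampleV f A x n ϑ) ∧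
      w / 2 < sampleV f A x n (θ n) := by
  filter_upwards [hW.eventually_const_lt (half_lt_self hw)] with n hn
  refine ⟨hmin n ?_, hn.trans_le (empMean_gaussWeightedSq_le_sampleV n _)⟩
  obtain ⟨i, hi, hfi⟩ := exists_ne_zero_of_empMean_ne_zero (by linarith : _ ≠ (0 : ℝ))
  exact ⟨i, hi, fun h => hfi (by simp [gaussWeightedSq, h])⟩

theorem tendsto_argmin_sampleV {c : ℝ} (hc0 : 0 ≤ c) (hc : ∀ v, ‖v‖ ≤ c * nrm (A *ᵥ v))
    {F : (Fin k → ℝ) → ℝ} {ϑstar : Fin k → ℝ} (hstar : ∀ ϑ, F ϑstar ≤ F ϑ)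
    {D : Set (Fin k → ℝ)} (hD : Dense D)
    (hF : ∀ q ∈ insert ϑstar D, Tendsto (fun n => sampleV f A x n q) atTop (𝓝 (F q)))
    {w : ℝ} (hw : 0 < w) (hW : Tendsto (fun n => empMean x n (gaussWeightedSq f)) atTop (𝓝 w))
    (hV : ∀ a : ℕ, ∃ U, Tendsto (fun n => empMean x n (fun y => f y ^ 2 * exp (a * nrm y)))
      atTop (𝓝 U))
    {θ : ℕ → Fin k → ℝ}
    (hmin : ∀ n, (∃ i < n, f (x i) ≠ 0) → ∀ ϑ, sampleV f A x n (θ n) ≤ sampleV f A x n ϑ) :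
    Tendsto θ atTop (𝓝 ϑstar) ∧
      Tendsto (fun n => sampleV f A x n (θ n)) atTop (𝓝 (F ϑstar)) := by
  set Φ := sampleV f A x
  have hΦstar := hF ϑstar (mem_insert _ _)
  have hFstar : 0 < F ϑstar := hw.trans_le <|
    le_of_tendsto_of_tendsto' hW hΦstar fun n => empMean_gaussWeightedSq_le_sampleV n ϑstar
  have hmin' : ∀ᶠ n in atTop, ∀ ϑ, Φ n (θ n) ≤ Φ n ϑ :=
    (eventually_argmin_and_half_lt_sampleV hw hW hmin).mono fun _ h => h.1
  have hpos : ∀ᶠ n in atTop, w / 2 < Φ n (θ n) :=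
    (eventually_argmin_and_half_lt_sampleV hw hW hmin).mono fun _ h => h.2
  have hkey : ∀ᶠ n in atTop,
      nrm (A *ᵥ (θ n - ϑstar)) ^ 2 / 4 ≤ log (Φ n ϑstar / Φ n (θ n)) :=
    (hmin'.and hpos).mono fun n h => nrm_mulVec_sq_div_four_le_log h.1 (by linarith [h.2]) _
  obtain ⟨R, hR⟩ : ∃ R, ∀ᶠ n in atTop, θ n ∈ closedBall ϑstar R := by
    refine ⟨c * √(4 * log ((F ϑstar + 1) / (w / 2))), ?_⟩
    filter_upwards [hkey, hpos, hmin', hΦstar.eventually_lt_const (lt_add_one _)]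
      with n hk hp hm hs
    have hlog : log (Φ n ϑstar / Φ n (θ n)) ≤ log ((F ϑstar + 1) / (w / 2)) :=
      log_le_log (div_pos (by linarith [hm ϑstar]) (by linarith))
        (div_le_div₀ (by linarith) hs.le (by linarith) hp.le)
    rw [mem_closedBall, dist_eq_norm]
    exact (hc _).trans <| mul_le_mul_of_nonneg_left
      ((le_abs_self _).trans (Real.abs_le_sqrt (by linarith))) hc0
  obtain ⟨L, hL⟩ := exists_eventually_sampleV_sub_le (A := A) hV ϑstar (R + 1)
  have hval : Tendsto (fun n => Φ n (θ n)) atTop (𝓝 (F ϑstar)) := tendsto_order.2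
    ⟨eventually_lt_of_dense hD (fun q hq m' hm' =>
        (hF q (mem_insert_of_mem _ hq)).eventually_const_lt (hm'.trans_le (hstar q))) hR hL,
      fun b hb => (hmin'.and (hΦstar.eventually_lt_const hb)).mono fun n h =>
        (h.1 ϑstar).trans_lt h.2⟩
  refine ⟨?_, hval⟩
  have hlog : Tendsto (fun n => √(4 * log (Φ n ϑstar / Φ n (θ n)))) atTop (𝓝 0) := by
    simpa [div_self hFstar.ne'] using
      (((hΦstar.div hval hFstar.ne').log (by simp [hFstar.ne'])).const_mul 4).sqrt
  have hnrm : Tendsto (fun n => nrm (A *ᵥ (θ n - ϑstar))) atTop (𝓝 0) :=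
    squeeze_zero' (Eventually.of_forall fun n => nrm_nonneg _)
      (hkey.mono fun n h => (le_abs_self _).trans (Real.abs_le_sqrt (by linarith))) hlog
  rw [tendsto_iff_norm_sub_tendsto_zero]
  exact squeeze_zero (fun n => norm_nonneg _) (fun n => hc _) (by simpa using hnrm.const_mul c)

end SamplePathConvergence

section Integrability
variable {d : ℕ} {μ : Measure (Fin d → ℝ)} {f : (Fin d → ℝ) → ℝ}

lemma measurable_vIntegrand (hf : Measurable f) (θ : Fin d → ℝ) :
    Measurable (vIntegrand f θ) :=
  (hf.pow_const 2).mul (((continuous_dot θ).measurable.neg).add_const _).exp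

lemma measurable_gaussWeightedSq (hf : Measurable f) : Measurable (gaussWeightedSq f) :=
  (hf.pow_const 2).mul ((continuous_nrm.measurable.pow_const 2).neg.div_const 2).exp

lemma integrable_vIntegrand
    (h02 : ∀ θ : Fin d → ℝ, Integrable (fun x => f x ^ 2 * exp (-(dot θ x))) μ)
    (θ : Fin d → ℝ) : Integrable (vIntegrand f θ) μ :=
  ((h02 θ).mul_const (exp (nrm θ ^ 2 / 2))).congr <| Eventually.of_forall fun x => by
    simp only [vIntegrand, exp_add]; ring

lemma integrable_gaussWeightedSq (hf : Measurable f)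
    (h02 : ∀ θ : Fin d → ℝ, Integrable (fun x => f x ^ 2 * exp (-(dot θ x))) μ) :
    Integrable (gaussWeightedSq f) μ := by
  refine (h02 0).mono' (measurable_gaussWeightedSq hf).aestronglyMeasurable
    (Eventually.of_forall fun x => ?_)
  rw [Real.norm_of_nonneg (gaussWeightedSq_nonneg x), gaussWeightedSq]
  gcongr
  simp only [dot, Pi.zero_apply, zero_mul, Finset.sum_const_zero, neg_zero]
  linarith [sq_nonneg (nrm x)]

/-- `e^{a|x|} ≤ e^{a ∑ |xᵢ|}`, and the latter is one of the `2^d` exponentials `e^{-θ·x}` with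
`θᵢ = ±a`, all of which are integrable against `f²`. -/
lemma integrable_sq_mul_exp_nrm (hf : Measurable f)
    (h02 : ∀ θ : Fin d → ℝ, Integrable (fun x => f x ^ 2 * exp (-(dot θ x))) μ)
    {a : ℝ} (ha : 0 ≤ a) : Integrable (fun x => f x ^ 2 * exp (a * nrm x)) μ := by
  set θ : (Fin d → Bool) → Fin d → ℝ := fun s i => if s i then -a else a
  refine (integrable_finsetSum Finset.univ fun s _ => h02 (θ s)).mono'
    ((hf.pow_const 2).mul (continuous_nrm.measurable.const_mul a).exp).aestronglyMeasurable
    (Eventually.of_forall fun x => ?_)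
  rw [Real.norm_of_nonneg (by positivity)]
  set s : Fin d → Bool := fun i => decide (0 ≤ x i)
  have hdot : -(dot (θ s) x) = a * ∑ i, |x i| := by
    rw [dot, ← Finset.sum_neg_distrib, Finset.mul_sum]
    refine Finset.sum_congr rfl fun i _ => ?_
    by_cases hx : 0 ≤ x i
    · simp [θ, s, hx, abs_of_nonneg hx]
    · simp [θ, s, hx, abs_of_neg (not_le.1 hx)]
  calc f x ^ 2 * exp (a * nrm x) ≤ f x ^ 2 * exp (-(dot (θ s) x)) := by
        rw [hdot]; gcongr; exact nrm_le_sum_abs x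
    _ ≤ ∑ s', f x ^ 2 * exp (-(dot (θ s') x)) :=
        Finset.single_le_sum (f := fun s' => f x ^ 2 * exp (-(dot (θ s') x)))
          (fun _ _ => by positivity) (Finset.mem_univ s)

lemma integral_gaussWeightedSq_pos (hf : Measurable f)
    (h02 : ∀ θ : Fin d → ℝ, Integrable (fun x => f x ^ 2 * exp (-(dot θ x))) μ)
    (h01 : 0 < μ {x | f x ≠ 0}) : 0 < ∫ x, gaussWeightedSq f x ∂μ := by
  rw [integral_pos_iff_support_of_nonneg gaussWeightedSq_nonneg
    (integrable_gaussWeightedSq hf h02)]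
  convert h01 using 2
  ext x
  simp [gaussWeightedSq, exp_ne_zero]

end Integrability

lemma ae_tendsto_empMean_integral {d : ℕ} {Ω : Type*} [MeasurableSpace Ω] {P : Measure Ω}
    {Gs : ℕ → Ω → Fin d → ℝ} (hGmeas : ∀ i, Measurable (Gs i))
    (hGindep : iIndepFun Gs P) (hGlaw : ∀ i, Measure.map (Gs i) P = stdGaussian d)
    {g : (Fin d → ℝ) → ℝ} (hg : Measurable g) (hgi : Integrable g (stdGaussian d)) :
    ∀ᵐ ω ∂P, Tendsto (fun n => empMean (fun i => Gs i ω) n g) atTop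
      (𝓝 (∫ x, g x ∂stdGaussian d)) := by
  have hident : ∀ i, IdentDistrib (Gs i) (Gs 0) P P := fun i =>
    ⟨(hGmeas i).aemeasurable, (hGmeas 0).aemeasurable, by rw [hGlaw i, hGlaw 0]⟩
  have hint : Integrable (fun ω => g (Gs 0 ω)) P := by
    rw [← hGlaw 0] at hgi
    exact (integrable_map_measure hg.aestronglyMeasurable (hGmeas 0).aemeasurable).1 hgi
  have hslln := strong_law_ae_real (fun i ω => g (Gs i ω)) hint
    (fun i j hij => (hGindep.comp (fun _ => g) (fun _ => hg)).indepFun hij)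
    (fun i => (hident i).comp hg)
  rw [← hGlaw 0, integral_map (hGmeas 0).aemeasurable hg.aestronglyMeasurable]
  filter_upwards [hslln] with ω hω
  simpa only [empMean, one_div, inv_mul_eq_div] using hω

theorem stmt2_general {d d' : ℕ}
    {Ω : Type*} [MeasurableSpace Ω] (P : Measure Ω)
    (Gs : ℕ → Ω → Fin d → ℝ)
    (hGmeas : ∀ i, Measurable (Gs i))
    (hGindep : iIndepFun Gs P)
    (hGlaw : ∀ i, Measure.map (Gs i) P = stdGaussian d)
    (f : (Fin d → ℝ) → ℝ) (hf : Measurable f)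
    (h01 : 0 < stdGaussian d {x | f x ≠ 0})
    (h02 : ∀ θ : Fin d → ℝ,
      Integrable (fun x => f x ^ 2 * Real.exp (-(dot θ x))) (stdGaussian d))
    (A : Matrix (Fin d) (Fin d') ℝ) (hA : A.rank = d')
    (ϑstar : Fin d' → ℝ) (hstar : ∀ ϑ, vFA A f ϑstar ≤ vFA A f ϑ)
    (ϑn : ℕ → Ω → Fin d' → ℝ)
    (hϑmin : ∀ n ω, (∃ i < n, f (Gs i ω) ≠ 0) →
      ∀ ϑ, vnFA Gs A f n ω (ϑn n ω) ≤ vnFA Gs A f n ω ϑ) :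
    ∀ᵐ ω ∂P, Tendsto (fun n => ϑn n ω) atTop (𝓝 ϑstar) ∧
      Tendsto (fun n => vnFA Gs A f n ω (ϑn n ω)) atTop (𝓝 (vFA A f ϑstar)) := by
  have hslln {g : (Fin d → ℝ) → ℝ} (hg : Measurable g) (hgi : Integrable g (stdGaussian d)) :=
    ae_tendsto_empMean_integral hGmeas hGindep hGlaw hg hgi
  obtain ⟨c, hc0, hc⟩ := exists_norm_le_mul_nrm_mulVec A hA
  obtain ⟨D, hDcount, hD⟩ := TopologicalSpace.exists_countable_dense (Fin d' → ℝ)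
  have hF := (ae_ball_iff (hDcount.insert ϑstar)).2 fun q _ =>
    hslln (measurable_vIntegrand hf (A *ᵥ q)) (integrable_vIntegrand h02 _)
  have hW := hslln (measurable_gaussWeightedSq hf) (integrable_gaussWeightedSq hf h02)
  have hV := ae_all_iff.2 fun a : ℕ =>
    hslln ((hf.pow_const 2).mul (continuous_nrm.measurable.const_mul (a : ℝ)).exp)
      (integrable_sq_mul_exp_nrm hf h02 a.cast_nonneg)
  filter_upwards [hF, hW, hV] with ω hFω hWω hVω
  exact tendsto_argmin_sampleV hc0 hc hstar hD hFω (integral_gaussWeightedSq_pos hf h02 h01)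
    hWω (fun a => ⟨_, hVω a⟩) (hϑmin · ω)

/-- Under (0.1) and (0.2), `ϑ_n^{f,A} → ϑ_⋆^{f,A}` and `v_n^{f,A}(ϑ_n^{f,A}) → v^{f,A}(ϑ_⋆^{f,A})`
almost surely. -/
theorem stmt2 {d d' : ℕ} (hd : d' ≤ d)
    {Ω : Type*} [MeasurableSpace Ω] (P : Measure Ω) [IsProbabilityMeasure P]
    (Gs : ℕ → Ω → Fin d → ℝ)
    (hGmeas : ∀ i, Measurable (Gs i))
    (hGindep : iIndepFun Gs P)
    (hGlaw : ∀ i, Measure.map (Gs i) P = stdGaussian d)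
    (f : (Fin d → ℝ) → ℝ) (hf : Measurable f)
    (h01 : 0 < stdGaussian d {x | f x ≠ 0})
    (h02 : ∀ θ : Fin d → ℝ,
      Integrable (fun x => f x ^ 2 * Real.exp (-(dot θ x))) (stdGaussian d))
    (A : Matrix (Fin d) (Fin d') ℝ) (hA : A.rank = d')
    (ϑstar : Fin d' → ℝ) (hstar : ∀ ϑ, vFA A f ϑstar ≤ vFA A f ϑ)
    (ϑn : ℕ → Ω → Fin d' → ℝ) (hϑmeas : ∀ n, Measurable (ϑn n))
    (hϑmin : ∀ n ω, (∃ i < n, f (Gs i ω) ≠ 0) →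
      ∀ ϑ, vnFA Gs A f n ω (ϑn n ω) ≤ vnFA Gs A f n ω ϑ) :
    ∀ᵐ ω ∂P, Tendsto (fun n => ϑn n ω) atTop (𝓝 ϑstar) ∧
      Tendsto (fun n => vnFA Gs A f n ω (ϑn n ω)) atTop (𝓝 (vFA A f ϑstar)) :=
  stmt2_general P Gs hGmeas hGindep hGlaw f hf h01 h02 A hA ϑstar hstar ϑn hϑmin

end
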